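/- arXiv:2503.10632 — 5 statements merged into one kernel-verified Lean document; each statement's English description precedes it below -/
import Mathlib

section
/- Let m ≥ 1 and y ∈ ℝ^m. Define g : ℝ → ℝ by g(λ) = Σ_{i=1}^m max(y_i − λ, 0). Then g is continuous, nonincreasing, satisfies g(λ) → +∞ as λ → −∞ and g(λ) = 0 for λ ≥ max_i y_i, and there exists a unique λ* ∈ ℝ with g(λ*) = 1; moreover g is strictly decreasing at every λ with g(λ) > 0. -/
open Filter Topology

/-! Each summand `max (y i - l) 0` is continuous and nonincreasing in `l`, and strictly decreasing
wherever it is positive. The threshold exists by the intermediate value theorem, since the sum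
vanishes above `max_i y i` and is unbounded below; it is unique because the sum is strictly
decreasing while positive. -/

section ThresholdSum

variable {ι : Type*} [Fintype ι] (y : ι → ℝ)

theorem continuous_sum_max_sub_zero : Continuous fun l : ℝ => ∑ i, max (y i - l) 0 :=
  continuous_finsetSum _ fun _ _ => (continuous_const.sub continuous_id).max continuous_const

theorem antitone_sum_max_sub_zero : Antitone fun l : ℝ => ∑ i, max (y i - l) 0 :=
  fun _ _ hab => Finset.sum_le_sum fun _ _ => max_le_max (by linarith) le_rfl

theorem sum_max_sub_zero_eq_zero {l : ℝ} (h : ∀ i, y i ≤ l) : ∑ i, max (y i - l) 0 = 0 :=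
  Finset.sum_eq_zero fun i _ => max_eq_right (sub_nonpos.mpr (h i))

theorem sub_le_sum_max_sub_zero (i : ι) (l : ℝ) : y i - l ≤ ∑ j, max (y j - l) 0 :=
  (le_max_left _ _).trans <|
    Finset.single_le_sum (f := fun j => max (y j - l) 0) (fun _ _ => le_max_right _ _)
      (Finset.mem_univ i)

theorem tendsto_sum_max_sub_zero_atBot [Nonempty ι] :
    Tendsto (fun l : ℝ => ∑ i, max (y i - l) 0) atBot atTop := by
  let i : ι := Classical.arbitrary ι
  refine tendsto_atTop_mono (sub_le_sum_max_sub_zero y i) ?_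
  exact tendsto_atBot_atTop.mpr fun b => ⟨y i - b, fun l hl => by linarith⟩

theorem sum_max_sub_zero_lt {a b : ℝ} (hab : a < b) (hpos : 0 < ∑ i, max (y i - a) 0) :
    ∑ i, max (y i - b) 0 < ∑ i, max (y i - a) 0 := by
  obtain ⟨i, -, hi⟩ := Finset.exists_ne_zero_of_sum_ne_zero hpos.ne'
  have hia : a < y i := by
    by_contra! h
    exact hi (max_eq_right (by linarith))
  refine Finset.sum_lt_sum (fun j _ => max_le_max (by linarith) le_rfl)
    ⟨i, Finset.mem_univ i, ?_⟩
  rw [max_eq_left (by linarith : 0 ≤ y i - a)]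
  exact max_lt (by linarith) (by linarith)

theorem existsUnique_sum_max_sub_zero_eq [Nonempty ι] {c : ℝ} (hc : 0 < c) :
    ∃! l : ℝ, ∑ i, max (y i - l) 0 = c := by
  obtain ⟨M, hM⟩ := Finite.bddAbove_range y
  obtain ⟨l, hl⟩ := mem_range_of_exists_le_of_exists_ge (continuous_sum_max_sub_zero y)
    ⟨M, (sum_max_sub_zero_eq_zero y fun i => hM ⟨i, rfl⟩).trans_le hc.le⟩
    ((tendsto_sum_max_sub_zero_atBot y).eventually_ge_atTop c).exists
  simp only at hl
  refine ⟨l, hl, fun l' hl' => ?_⟩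
  by_contra hne
  rcases lt_or_gt_of_ne hne with h | h
  · linarith [sum_max_sub_zero_lt y h (hl'.symm ▸ hc)]
  · linarith [sum_max_sub_zero_lt y h (hl.symm ▸ hc)]

end ThresholdSum

/-- Properties of `g(λ) = ∑_i max(y_i − λ, 0)`: it is continuous, nonincreasing,
tends to `+∞` as `λ → −∞`, vanishes for `λ ≥ max_i y_i`, takes the value `1`
at a unique point, and is strictly decreasing wherever it is positive. -/
theorem simplex_threshold_function_properties
    (m : ℕ) (hm : 1 ≤ m) (y : Fin m → ℝ) :
    Continuous (fun l : ℝ => ∑ i, max (y i - l) 0) ∧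
    Antitone (fun l : ℝ => ∑ i, max (y i - l) 0) ∧
    Tendsto (fun l : ℝ => ∑ i, max (y i - l) 0) atBot atTop ∧
    (∀ l : ℝ, (∀ i, y i ≤ l) → ∑ i, max (y i - l) 0 = 0) ∧
    (∃! l : ℝ, ∑ i, max (y i - l) 0 = 1) ∧
    (∀ a b : ℝ, a < b → 0 < ∑ i, max (y i - a) 0 →
      ∑ i, max (y i - b) 0 < ∑ i, max (y i - a) 0) := by
  have : Nonempty (Fin m) := ⟨⟨0, hm⟩⟩
  exact ⟨continuous_sum_max_sub_zero y, antitone_sum_max_sub_zero y,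
    tendsto_sum_max_sub_zero_atBot y, fun _ => sum_max_sub_zero_eq_zero y,
    existsUnique_sum_max_sub_zero_eq y one_pos, fun _ _ => sum_max_sub_zero_lt y⟩
end

section
/- Let m ≥ 1 and y ∈ ℝ^m, and let λ* be the unique real number satisfying Σ_{i=1}^m max(y_i − λ*, 0) = 1. Then the vector x* defined componentwise by x*_i = max(y_i − λ*, 0) is the unique minimizer of (1/2)‖x − y‖² over the probability simplex Δ_m. -/
/-- If `λ*` satisfies `∑_i max(y_i − λ*, 0) = 1`, then `x*_i = max(y_i − λ*, 0)`
is the unique minimizer of `(1/2)‖x − y‖²` over the probability simplex. -/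
theorem simplex_projection_soft_threshold
    (m : ℕ) (hm : 1 ≤ m) (y : Fin m → ℝ) (lstar : ℝ)
    (hl : ∑ i, max (y i - lstar) 0 = 1) :
    ((∀ i, 0 ≤ max (y i - lstar) 0) ∧ (∑ i, max (y i - lstar) 0 = 1) ∧
      (∀ z : Fin m → ℝ, (∀ i, 0 ≤ z i) → (∑ i, z i = 1) →
        (1 / 2) * ∑ i, (max (y i - lstar) 0 - y i) ^ 2 ≤
          (1 / 2) * ∑ i, (z i - y i) ^ 2)) ∧
    (∀ x : Fin m → ℝ, (∀ i, 0 ≤ x i) → (∑ i, x i = 1) →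
      (∀ z : Fin m → ℝ, (∀ i, 0 ≤ z i) → (∑ i, z i = 1) →
        (1 / 2) * ∑ i, (x i - y i) ^ 2 ≤ (1 / 2) * ∑ i, (z i - y i) ^ 2) →
      x = fun i => max (y i - lstar) 0) := by
  set x : Fin m → ℝ := fun i => max (y i - lstar) 0 with hx
  have hxnn : ∀ i, 0 ≤ x i := fun i => le_max_right _ _
  have hcomp : ∀ i, (x i - y i + lstar) * x i = 0 := by
    intro i
    simp only [hx]
    rcases le_total (y i - lstar) 0 with h | h
    · rw [max_eq_right h]; ring
    · rw [max_eq_left h]; ring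
  have hfac : ∀ i, 0 ≤ x i - y i + lstar := by
    intro i
    simp only [hx]
    rcases le_total (y i - lstar) 0 with h | h
    · rw [max_eq_right h]; linarith
    · rw [max_eq_left h]; linarith
  have hinner : ∀ z : Fin m → ℝ, (∀ i, 0 ≤ z i) → ∑ i, z i = 1 →
      0 ≤ ∑ i, (x i - y i) * (z i - x i) := by
    intro z hz hzs
    have h1 : ∑ i, (x i - y i) * (z i - x i)
        = (∑ i, (x i - y i + lstar) * z i) - (∑ i, (x i - y i + lstar) * x i)
          - lstar * ∑ i, z i + lstar * ∑ i, x i := by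
      rw [Finset.mul_sum, Finset.mul_sum, ← Finset.sum_sub_distrib,
        ← Finset.sum_sub_distrib, ← Finset.sum_add_distrib]
      exact Finset.sum_congr rfl fun i _ => by ring
    have h2 : ∑ i, (x i - y i + lstar) * x i = 0 :=
      Finset.sum_eq_zero fun i _ => hcomp i
    have h3 : ∑ i, x i = 1 := hl
    rw [h1, h2, h3, hzs]
    have h4 : 0 ≤ ∑ i, (x i - y i + lstar) * z i :=
      Finset.sum_nonneg fun i _ => mul_nonneg (hfac i) (hz i)
    linarith
  have hexp : ∀ z : Fin m → ℝ, ∑ i, (z i - y i) ^ 2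
      = ∑ i, (x i - y i) ^ 2 + ∑ i, (z i - x i) ^ 2
        + 2 * ∑ i, (x i - y i) * (z i - x i) := by
    intro z
    rw [Finset.mul_sum, ← Finset.sum_add_distrib, ← Finset.sum_add_distrib]
    exact Finset.sum_congr rfl fun i _ => by ring
  have hmin : ∀ z : Fin m → ℝ, (∀ i, 0 ≤ z i) → ∑ i, z i = 1 →
      (1 / 2) * ∑ i, (x i - y i) ^ 2 ≤ (1 / 2) * ∑ i, (z i - y i) ^ 2 := by
    intro z hz hzs
    have h1 := hexp z
    have h2 := hinner z hz hzs
    have h3 : 0 ≤ ∑ i, (z i - x i) ^ 2 :=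
      Finset.sum_nonneg fun i _ => sq_nonneg _
    linarith
  refine ⟨⟨hxnn, hl, hmin⟩, ?_⟩
  intro x' hx'nn hx'sum hx'min
  have h1 : (1 / 2) * ∑ i, (x' i - y i) ^ 2 ≤ (1 / 2) * ∑ i, (x i - y i) ^ 2 :=
    hx'min x hxnn hl
  have h2 := hmin x' hx'nn hx'sum
  have h3 := hexp x'
  have h4 := hinner x' hx'nn hx'sum
  have h5 : ∑ i, (x' i - x i) ^ 2 = 0 := by
    have h6 : 0 ≤ ∑ i, (x' i - x i) ^ 2 :=
      Finset.sum_nonneg fun i _ => sq_nonneg _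
    linarith
  funext i
  have h7 : (x' i - x i) ^ 2 = 0 :=
    (Finset.sum_eq_zero_iff_of_nonneg fun j _ => sq_nonneg _).mp h5 i (Finset.mem_univ i)
  have := pow_eq_zero_iff (n := 2) (by norm_num) |>.mp h7
  have : x' i = x i := by linarith [sub_eq_zero.mp this]
  simpa [hx] using this
end

section
/- Let m ≥ 1, let y ∈ ℝ^m be sorted in nonincreasing order y_1 ≥ ⋯ ≥ y_m, let ρ = max{ i ∈ [m] : y_i − (1/i)(Σ_{j=1}^i y_j − 1) > 0 }, and let λ = (1/ρ)(Σ_{i=1}^ρ y_i − 1). Then y_i − λ > 0 for every i ≤ ρ, and y_i − λ ≤ 0 for every i > ρ. -/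
/-!
Only the indices past `ρ` need an argument. By maximality of `ρ` the test fails at `ρ + 1`:
`(ρ + 2) y_{ρ+1} ≤ ∑_{j ≤ ρ} y_j + y_{ρ+1} - 1`, which rearranges to `y_{ρ+1} ≤ λ`;
monotonicity then carries this bound to every later index.
-/

open Finset

section

variable {α : Type*} [LinearOrder α] [LocallyFiniteOrderBot α]

theorem Finset.Iio_eq_Iic_of_covBy {a b : α} (h : a ⋖ b) : Iio b = Iic a := by
  rw [← coe_inj, coe_Iio, coe_Iic, h.Iio_eq]

/-- `λ_i = (∑_{j ≤ i} y_j - 1) / i`, the index `i` being counted from `1` as `#(Iic i)`. -/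
noncomputable def simplexThreshold (y : α → ℝ) (i : α) : ℝ :=
  1 / (#(Iic i) : ℝ) * ((∑ j ∈ Iic i, y j) - 1)

theorem le_one_div_mul_of_sub_one_div_succ_mul_nonpos {x s n : ℝ} (hn : 0 < n)
    (h : x - 1 / (n + 1) * (x + s - 1) ≤ 0) : x ≤ 1 / n * (s - 1) := by
  rw [one_div_mul_eq_div, le_div_iff₀ hn]
  rw [one_div_mul_eq_div, sub_nonpos, le_div_iff₀ (by positivity)] at h
  linarith

theorem le_simplexThreshold_of_covBy {y : α → ℝ} {a b : α} (hab : a ⋖ b)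
    (hb : y b - simplexThreshold y b ≤ 0) : y b ≤ simplexThreshold y a := by
  have hcard : (#(Iic b) : ℝ) = #(Iic a) + 1 := by
    rw [Iic_eq_cons_Iio, card_cons, Iio_eq_Iic_of_covBy hab, Nat.cast_succ]
  have hsum : ∑ j ∈ Iic b, y j = y b + ∑ j ∈ Iic a, y j := by
    rw [Iic_eq_cons_Iio, sum_cons, Iio_eq_Iic_of_covBy hab]
  rw [simplexThreshold, hcard, hsum] at hb
  have hpos : (0 : ℝ) < #(Iic a) := Nat.cast_pos.2 (card_pos.2 nonempty_Iic)
  exact le_one_div_mul_of_sub_one_div_succ_mul_nonpos hpos hb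

theorem simplexThreshold_lt_iff_le [IsStronglyAtomic α] {y : α → ℝ} (hy : Antitone y)
    {ρ : α} (hρ : simplexThreshold y ρ < y ρ)
    (hρmax : ∀ i, simplexThreshold y i < y i → i ≤ ρ) (i : α) :
    simplexThreshold y ρ < y i ↔ i ≤ ρ := by
  refine ⟨fun hi => ?_, fun hi => hρ.trans_le (hy hi)⟩
  by_contra! hρi
  obtain ⟨b, hρb, hbi⟩ := exists_covBy_le_of_lt hρi
  have hb : y b - simplexThreshold y b ≤ 0 :=
    sub_nonpos.2 (not_lt.1 fun h => hρb.lt.not_ge (hρmax b h))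
  exact (hi.trans_le (hy hbi)).not_ge (le_simplexThreshold_of_covBy hρb hb)

end

theorem simplex_projection_rho_threshold_general
    (m : ℕ) (y : Fin m → ℝ)
    (hsorted : ∀ i j : Fin m, i ≤ j → y j ≤ y i)
    (ρ : Fin m)
    (hρmem : 0 < y ρ - (1 / ((ρ : ℕ) + 1 : ℝ)) * ((∑ j ∈ Finset.Iic ρ, y j) - 1))
    (hρmax : ∀ i : Fin m,
      0 < y i - (1 / ((i : ℕ) + 1 : ℝ)) * ((∑ j ∈ Finset.Iic i, y j) - 1) → i ≤ ρ)
    (l : ℝ) (hl : l = (1 / ((ρ : ℕ) + 1 : ℝ)) * ((∑ i ∈ Finset.Iic ρ, y i) - 1)) :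
    (∀ i : Fin m, i ≤ ρ → 0 < y i - l) ∧ (∀ i : Fin m, ρ < i → y i - l ≤ 0) := by
  have hthreshold (i : Fin m) :
      simplexThreshold y i = 1 / ((i : ℕ) + 1 : ℝ) * ((∑ j ∈ Iic i, y j) - 1) := by
    simp [simplexThreshold, Fin.card_Iic]
  simp only [← hthreshold, sub_pos] at hρmem hρmax hl
  have hsupport := simplexThreshold_lt_iff_le hsorted hρmem hρmax
  subst hl
  exact ⟨fun i hi => sub_pos.2 ((hsupport i).2 hi),
    fun i hi => sub_nonpos.2 (not_lt.1 fun h => hi.not_ge ((hsupport i).1 h))⟩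

/-- Threshold property of the index `ρ` in the simplex-projection algorithm:
with `y` sorted nonincreasingly, `ρ` the largest index with
`y_ρ − (1/ρ)(∑_{j≤ρ} y_j − 1) > 0`, and `λ = (1/ρ)(∑_{i≤ρ} y_i − 1)`, one has
`y_i − λ > 0` for `i ≤ ρ` and `y_i − λ ≤ 0` for `i > ρ`. -/
theorem simplex_projection_rho_threshold
    (m : ℕ) (hm : 1 ≤ m) (y : Fin m → ℝ)
    (hsorted : ∀ i j : Fin m, i ≤ j → y j ≤ y i)
    (ρ : Fin m)
    (hρmem : 0 < y ρ - (1 / ((ρ : ℕ) + 1 : ℝ)) * ((∑ j ∈ Finset.Iic ρ, y j) - 1))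
    (hρmax : ∀ i : Fin m,
      0 < y i - (1 / ((i : ℕ) + 1 : ℝ)) * ((∑ j ∈ Finset.Iic i, y j) - 1) → i ≤ ρ)
    (l : ℝ) (hl : l = (1 / ((ρ : ℕ) + 1 : ℝ)) * ((∑ i ∈ Finset.Iic ρ, y i) - 1)) :
    (∀ i : Fin m, i ≤ ρ → 0 < y i - l) ∧ (∀ i : Fin m, ρ < i → y i - l ≤ 0) :=
  simplex_projection_rho_threshold_general m y hsorted ρ hρmem hρmax l hl
end

section
/- Let m ≥ 1, let y ∈ ℝ^m be sorted in nonincreasing order y_1 ≥ ⋯ ≥ y_m, let ρ = max{ i ∈ [m] : y_i − (1/i)(Σ_{j=1}^i y_j − 1) > 0 }, λ = (1/ρ)(Σ_{i=1}^ρ y_i − 1), and define x* componentwise by x*_i = max(y_i − λ, 0). Then x*_i ≥ 0 for all i and Σ_{i=1}^m x*_i = 1; that is, x* lies in the probability simplex Δ_m. -/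
/-!
Every entry up to `ρ` exceeds `λ`, since `y` is sorted and `y_ρ > λ`; every later entry is at most
`λ`, because maximality of `ρ` says `y_{ρ+1} ≤ λ_{ρ+1}`, and `λ_{ρ+1}` is a weighted mean of `λ_ρ`
and `y_{ρ+1}`, so this is the same as `y_{ρ+1} ≤ λ_ρ`. Hence `x*` keeps exactly the first `ρ`
entries, shifted by `λ`, and `λ` was chosen to make these sum to `1`.
-/

open Finset

theorem sum_max_sub_eq_sum_of_le_of_le {ι α : Type*} [Fintype ι] [AddCommGroup α] [LinearOrder α]
    [IsOrderedAddMonoid α] (s : Finset ι) (y : ι → α) (l : α)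
    (hs : ∀ i ∈ s, l ≤ y i) (hsc : ∀ i ∉ s, y i ≤ l) :
    ∑ i, max (y i - l) 0 = ∑ i ∈ s, (y i - l) := by
  rw [← sum_subset (subset_univ s) fun i _ hi => max_eq_right (sub_nonpos.mpr (hsc i hi))]
  exact sum_congr rfl fun i hi => max_eq_left (sub_nonneg.mpr (hs i hi))

theorem le_add_div_add_one_iff {K : Type*} [Field K] [LinearOrder K] [IsStrictOrderedRing K]
    {a s c : K} (hc : 0 < c) : a ≤ (s + a) / (c + 1) ↔ a ≤ s / c := by
  rw [le_div_iff₀ (by linarith), le_div_iff₀ hc]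
  constructor <;> intro h <;> linarith

theorem Fin.Iic_mk_succ_eq_insert {m : ℕ} (k : Fin m) (h : (k : ℕ) + 1 < m) :
    Iic (⟨k + 1, h⟩ : Fin m) = insert ⟨k + 1, h⟩ (Iic k) := by
  ext j
  simp only [mem_Iic, mem_insert, Fin.le_def, Fin.ext_iff]
  omega

namespace SimplexProjection

variable {m : ℕ} (y : Fin m → ℝ)

/-- Condat's `λ` for the first `k + 1` entries; indices are `0`-based, so the paper's `ρ` is
`ρ + 1` here. -/
noncomputable def threshold (k : Fin m) : ℝ :=
  (1 / ((k : ℕ) + 1 : ℝ)) * ((∑ j ∈ Iic k, y j) - 1)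

theorem sum_Iic_sub_threshold (k : Fin m) : ∑ i ∈ Iic k, (y i - threshold y k) = 1 := by
  rw [sum_sub_distrib, sum_const, Fin.card_Iic, nsmul_eq_mul, threshold]
  push_cast
  field_simp
  ring

theorem le_threshold_succ_iff (k : Fin m) (h : (k : ℕ) + 1 < m) :
    y ⟨k + 1, h⟩ ≤ threshold y ⟨k + 1, h⟩ ↔ y ⟨k + 1, h⟩ ≤ threshold y k := by
  have hk : (0 : ℝ) < (k : ℕ) + 1 := by positivity
  simp only [threshold, one_div_mul_eq_div, Fin.Iic_mk_succ_eq_insert k h,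
    sum_insert (show (⟨k + 1, h⟩ : Fin m) ∉ Iic k by simp [Fin.le_def])]
  rw [← le_add_div_add_one_iff hk]
  push_cast
  ring_nf

theorem le_threshold_of_lt (hy : Antitone y) {ρ : Fin m}
    (hρmax : ∀ i, threshold y i < y i → i ≤ ρ) {i : Fin m} (hi : ρ < i) :
    y i ≤ threshold y ρ := by
  have hρi : (ρ : ℕ) < i := Fin.lt_def.mp hi
  have h : (ρ : ℕ) + 1 < m := by omega
  have hnext : y ⟨ρ + 1, h⟩ ≤ threshold y ⟨ρ + 1, h⟩ :=
    not_lt.mp fun hlt => absurd (hρmax _ hlt) (by simp [Fin.le_def])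
  exact (hy (show (⟨ρ + 1, h⟩ : Fin m) ≤ i from Fin.le_def.mpr hρi)).trans
    ((le_threshold_succ_iff y ρ h).mp hnext)

end SimplexProjection

open SimplexProjection in
theorem simplex_projection_output_feasible_general
    (m : ℕ) (y : Fin m → ℝ)
    (hsorted : ∀ i j : Fin m, i ≤ j → y j ≤ y i)
    (ρ : Fin m)
    (hρmem : 0 < y ρ - (1 / ((ρ : ℕ) + 1 : ℝ)) * ((∑ j ∈ Finset.Iic ρ, y j) - 1))
    (hρmax : ∀ i : Fin m,
      0 < y i - (1 / ((i : ℕ) + 1 : ℝ)) * ((∑ j ∈ Finset.Iic i, y j) - 1) → i ≤ ρ)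
    (l : ℝ) (hl : l = (1 / ((ρ : ℕ) + 1 : ℝ)) * ((∑ i ∈ Finset.Iic ρ, y i) - 1))
    (xstar : Fin m → ℝ) (hx : ∀ i, xstar i = max (y i - l) 0) :
    (∀ i, 0 ≤ xstar i) ∧ ∑ i, xstar i = 1 := by
  have hl : l = threshold y ρ := hl
  have hρ : l < y ρ := hl ▸ sub_pos.mp hρmem
  have htail : ∀ i ∉ Iic ρ, y i ≤ l := fun i hi =>
    hl ▸ le_threshold_of_lt y hsorted (fun i hi => hρmax i (sub_pos.mpr hi))
      (not_le.mp (mt mem_Iic.mpr hi))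
  refine ⟨fun i => (hx i).symm ▸ le_max_right _ _, ?_⟩
  calc ∑ i, xstar i = ∑ i, max (y i - l) 0 := sum_congr rfl fun i _ => hx i
    _ = ∑ i ∈ Iic ρ, (y i - l) := sum_max_sub_eq_sum_of_le_of_le _ y l
        (fun i hi => hρ.le.trans (hsorted i ρ (mem_Iic.mp hi))) htail
    _ = 1 := hl ▸ sum_Iic_sub_threshold y ρ

/-- Feasibility of the output of the simplex-projection algorithm: with `y`
sorted nonincreasingly, `ρ` and `λ` as computed by the algorithm, the vector
`x*_i = max(y_i − λ, 0)` has nonnegative entries summing to `1`. -/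
theorem simplex_projection_output_feasible
    (m : ℕ) (hm : 1 ≤ m) (y : Fin m → ℝ)
    (hsorted : ∀ i j : Fin m, i ≤ j → y j ≤ y i)
    (ρ : Fin m)
    (hρmem : 0 < y ρ - (1 / ((ρ : ℕ) + 1 : ℝ)) * ((∑ j ∈ Finset.Iic ρ, y j) - 1))
    (hρmax : ∀ i : Fin m,
      0 < y i - (1 / ((i : ℕ) + 1 : ℝ)) * ((∑ j ∈ Finset.Iic i, y j) - 1) → i ≤ ρ)
    (l : ℝ) (hl : l = (1 / ((ρ : ℕ) + 1 : ℝ)) * ((∑ i ∈ Finset.Iic ρ, y i) - 1))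
    (xstar : Fin m → ℝ) (hx : ∀ i, xstar i = max (y i - l) 0) :
    (∀ i, 0 ≤ xstar i) ∧ ∑ i, xstar i = 1 :=
  simplex_projection_output_feasible_general m y hsorted ρ hρmem hρmax l hl xstar hx
end

section
/- Let m ≥ 1 and y ∈ ℝ^m. Let y_{(1)} ≥ y_{(2)} ≥ ⋯ ≥ y_{(m)} be the entries of y sorted in nonincreasing order, let ρ = max{ i ∈ [m] : y_{(i)} − (1/i)(Σ_{j=1}^i y_{(j)} − 1) > 0 }, let λ = (1/ρ)(Σ_{i=1}^ρ y_{(i)} − 1), and define x* componentwise by x*_i = max(y_i − λ, 0). Then x* is the unique minimizer of (1/2)‖x − y‖² over x ∈ ℝ^m subject to x_i ≥ 0 for all i and Σ_{i=1}^m x_i = 1. -/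
/-!
Write `v = y ∘ σ` and `λ_i = partialThreshold v i`. The test `λ_i < v_i` holds exactly for
`i ≤ ρ`: below `ρ` by monotonicity, and above `ρ` because failure of the test at the successor
`j` of `ρ` rewrites, via `(j + 1) λ_j = (ρ + 1) λ_ρ + v_j`, to `v_j ≤ λ_ρ`. Hence
`x* = max (y - λ_ρ) 0` sums to `∑_{i ≤ ρ} v_i - (ρ + 1) λ_ρ = 1`. Optimality and uniqueness
come from the variational inequality `⟪x* - y, z - x*⟫ ≥ 0` on the simplex, checked
coordinatewise against `-λ_ρ (z_i - x*_i)`, whose sum vanishes.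
-/

open Finset

noncomputable def partialThreshold {m : ℕ} (v : Fin m → ℝ) (i : Fin m) : ℝ :=
  (1 / ((i : ℕ) + 1 : ℝ)) * ((∑ j ∈ Iic i, v j) - 1)

section Threshold

variable {m : ℕ} {v : Fin m → ℝ}

lemma succ_mul_partialThreshold (v : Fin m → ℝ) (i : Fin m) :
    ((i : ℕ) + 1 : ℝ) * partialThreshold v i = (∑ j ∈ Iic i, v j) - 1 := by
  unfold partialThreshold
  field_simp

lemma le_partialThreshold_of_covBy {i j : Fin m} (hij : i ⋖ j)
    (hj : v j ≤ partialThreshold v j) : v j ≤ partialThreshold v i := by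
  have hval : (j : ℕ) = i + 1 := (Nat.covBy_iff_add_one_eq.1 (Fin.covBy_iff.1 hij)).symm
  have hIio : Iio j = Iic i := coe_inj.1 (by simpa using hij.Iio_eq)
  have hstep : ((i : ℕ) + 2 : ℝ) * partialThreshold v j =
      ((i : ℕ) + 1 : ℝ) * partialThreshold v i + v j := by
    have := succ_mul_partialThreshold v j
    rw [Iic_eq_cons_Iio, sum_cons, hIio, hval] at this
    push_cast at this
    linarith [succ_mul_partialThreshold v i]
  have hscaled := mul_le_mul_of_nonneg_left hj (by positivity : (0 : ℝ) ≤ (i : ℕ) + 2)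
  exact le_of_mul_le_mul_left (by linarith) (by positivity : (0 : ℝ) < (i : ℕ) + 1)

theorem partialThreshold_lt_iff (hv : Antitone v) {ρ : Fin m}
    (hρmem : partialThreshold v ρ < v ρ) (hρmax : ∀ i, partialThreshold v i < v i → i ≤ ρ)
    (i : Fin m) : partialThreshold v ρ < v i ↔ i ≤ ρ := by
  refine ⟨fun hlt => ?_, fun hle => hρmem.trans_le (hv hle)⟩
  by_contra! hρi
  obtain ⟨j, hρj, hji⟩ := exists_covBy_le_of_lt hρi
  have hfail : v j ≤ partialThreshold v j := not_lt.1 fun h => (hρmax j h).not_gt hρj.lt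
  exact (hlt.trans_le (hv hji)).not_ge (le_partialThreshold_of_covBy hρj hfail)

end Threshold

theorem sum_max_sub_zero_eq {ι : Type*} [Fintype ι] (f : ι → ℝ) (l : ℝ) (s : Finset ι)
    (hs : ∀ i, l < f i ↔ i ∈ s) : ∑ i, max (f i - l) 0 = ∑ i ∈ s, f i - #s * l := by
  have hout : ∀ i ∈ univ, i ∉ s → max (f i - l) 0 = 0 := fun i _ hi =>
    max_eq_right (sub_nonpos.2 (not_lt.1 (mt (hs i).1 hi)))
  rw [← sum_subset (subset_univ s) hout,
    sum_congr rfl fun i hi => max_eq_left (sub_nonneg.2 ((hs i).2 hi).le),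
    sum_sub_distrib, sum_const, nsmul_eq_mul]

theorem sum_max_sub_partialThreshold_eq_one {m : ℕ} {v : Fin m → ℝ} (hv : Antitone v)
    {ρ : Fin m} (hρmem : partialThreshold v ρ < v ρ)
    (hρmax : ∀ i, partialThreshold v i < v i → i ≤ ρ) :
    ∑ i, max (v i - partialThreshold v ρ) 0 = 1 := by
  rw [sum_max_sub_zero_eq v _ (Iic ρ) fun i => by
    rw [mem_Iic]; exact partialThreshold_lt_iff hv hρmem hρmax i, Fin.card_Iic]
  push_cast
  linarith [succ_mul_partialThreshold v ρ]

lemma neg_mul_sub_le_max_sub_mul {y l z : ℝ} (hz : 0 ≤ z) :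
    -l * (z - max (y - l) 0) ≤ (max (y - l) 0 - y) * (z - max (y - l) 0) := by
  rcases le_total l y with h | h
  · rw [max_eq_left (sub_nonneg.2 h)]
    exact le_of_eq (by ring)
  · rw [max_eq_right (sub_nonpos.2 h)]
    nlinarith

section Projection

variable {ι : Type*} [Fintype ι]

theorem sum_sq_sub_add_sum_sq_sub_le {x y z : ι → ℝ}
    (h : 0 ≤ ∑ i, (x i - y i) * (z i - x i)) :
    ∑ i, (x i - y i) ^ 2 + ∑ i, (z i - x i) ^ 2 ≤ ∑ i, (z i - y i) ^ 2 := by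
  have hexpand : ∑ i, (z i - y i) ^ 2 = ∑ i, (x i - y i) ^ 2 + ∑ i, (z i - x i) ^ 2 +
      2 * ∑ i, (x i - y i) * (z i - x i) := by
    simp only [mul_sum, ← sum_add_distrib]
    exact sum_congr rfl fun i _ => by ring
  linarith

theorem sum_sq_max_sub_add_sum_sq_sub_le {y z : ι → ℝ} {l : ℝ} (hz : ∀ i, 0 ≤ z i)
    (hsum : ∑ i, z i = ∑ i, max (y i - l) 0) :
    ∑ i, (max (y i - l) 0 - y i) ^ 2 + ∑ i, (z i - max (y i - l) 0) ^ 2 ≤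
      ∑ i, (z i - y i) ^ 2 := by
  refine sum_sq_sub_add_sum_sq_sub_le ?_
  have hlin : ∑ i, -l * (z i - max (y i - l) 0) = 0 := by
    rw [← mul_sum, sum_sub_distrib, hsum, sub_self, mul_zero]
  exact hlin.symm.trans_le (sum_le_sum fun i _ => neg_mul_sub_le_max_sub_mul (hz i))

end Projection

theorem simplex_projection_algorithm_correct_general
    (m : ℕ) (y : Fin m → ℝ)
    (σ : Equiv.Perm (Fin m))
    (hsorted : ∀ i j : Fin m, i ≤ j → y (σ j) ≤ y (σ i))
    (ρ : Fin m)
    (hρmem : 0 < y (σ ρ) -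
      (1 / ((ρ : ℕ) + 1 : ℝ)) * ((∑ j ∈ Finset.Iic ρ, y (σ j)) - 1))
    (hρmax : ∀ i : Fin m,
      0 < y (σ i) - (1 / ((i : ℕ) + 1 : ℝ)) * ((∑ j ∈ Finset.Iic i, y (σ j)) - 1) →
        i ≤ ρ)
    (l : ℝ) (hl : l = (1 / ((ρ : ℕ) + 1 : ℝ)) * ((∑ i ∈ Finset.Iic ρ, y (σ i)) - 1))
    (xstar : Fin m → ℝ) (hx : ∀ i, xstar i = max (y i - l) 0) :
    ((∀ i, 0 ≤ xstar i) ∧ (∑ i, xstar i = 1) ∧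
      (∀ z : Fin m → ℝ, (∀ i, 0 ≤ z i) → (∑ i, z i = 1) →
        (1 / 2) * ∑ i, (xstar i - y i) ^ 2 ≤ (1 / 2) * ∑ i, (z i - y i) ^ 2)) ∧
    (∀ x : Fin m → ℝ, (∀ i, 0 ≤ x i) → (∑ i, x i = 1) →
      (∀ z : Fin m → ℝ, (∀ i, 0 ≤ z i) → (∑ i, z i = 1) →
        (1 / 2) * ∑ i, (x i - y i) ^ 2 ≤ (1 / 2) * ∑ i, (z i - y i) ^ 2) →
      x = xstar) := by
  obtain rfl : xstar = fun i => max (y i - l) 0 := funext hx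
  have hsum : ∑ i, max (y i - l) 0 = 1 := by
    rw [← Equiv.sum_comp σ, hl]
    exact sum_max_sub_partialThreshold_eq_one (v := y ∘ σ) hsorted (sub_pos.1 hρmem)
      fun i hi => hρmax i (sub_pos.2 hi)
  have hpyth : ∀ z : Fin m → ℝ, (∀ i, 0 ≤ z i) → ∑ i, z i = 1 →
      ∑ i, (max (y i - l) 0 - y i) ^ 2 + ∑ i, (z i - max (y i - l) 0) ^ 2 ≤
        ∑ i, (z i - y i) ^ 2 :=
    fun z hz hz1 => sum_sq_max_sub_add_sum_sq_sub_le hz (hz1.trans hsum.symm)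
  refine ⟨⟨fun i => le_max_right _ _, hsum, fun z hz hz1 => ?_⟩, fun x hx0 hx1 hxmin => ?_⟩
  · have := hpyth z hz hz1
    have : 0 ≤ ∑ i, (z i - max (y i - l) 0) ^ 2 := by positivity
    linarith
  · have := hpyth x hx0 hx1
    have := hxmin _ (fun i => le_max_right _ _) hsum
    have hzero : ∑ i, (x i - max (y i - l) 0) ^ 2 = 0 := le_antisymm (by linarith) (by positivity)
    funext i
    exact sub_eq_zero.1 <| pow_eq_zero_iff two_ne_zero |>.1 <|
      (sum_eq_zero_iff_of_nonneg fun i _ => sq_nonneg _).1 hzero i (mem_univ i)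

/-- Correctness of the projection-onto-the-probability-simplex algorithm
(Condat): given `y ∈ ℝ^m`, sort its entries nonincreasingly via a permutation
`σ`, compute `ρ` and `λ` as in the algorithm, and set `x*_i = max(y_i − λ, 0)`.
Then `x*` is the unique minimizer of `(1/2)‖x − y‖²` over the probability
simplex. -/
theorem simplex_projection_algorithm_correct
    (m : ℕ) (hm : 1 ≤ m) (y : Fin m → ℝ)
    (σ : Equiv.Perm (Fin m))
    (hsorted : ∀ i j : Fin m, i ≤ j → y (σ j) ≤ y (σ i))
    (ρ : Fin m)
    (hρmem : 0 < y (σ ρ) -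
      (1 / ((ρ : ℕ) + 1 : ℝ)) * ((∑ j ∈ Finset.Iic ρ, y (σ j)) - 1))
    (hρmax : ∀ i : Fin m,
      0 < y (σ i) - (1 / ((i : ℕ) + 1 : ℝ)) * ((∑ j ∈ Finset.Iic i, y (σ j)) - 1) →
        i ≤ ρ)
    (l : ℝ) (hl : l = (1 / ((ρ : ℕ) + 1 : ℝ)) * ((∑ i ∈ Finset.Iic ρ, y (σ i)) - 1))
    (xstar : Fin m → ℝ) (hx : ∀ i, xstar i = max (y i - l) 0) :
    ((∀ i, 0 ≤ xstar i) ∧ (∑ i, xstar i = 1) ∧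
      (∀ z : Fin m → ℝ, (∀ i, 0 ≤ z i) → (∑ i, z i = 1) →
        (1 / 2) * ∑ i, (xstar i - y i) ^ 2 ≤ (1 / 2) * ∑ i, (z i - y i) ^ 2)) ∧
    (∀ x : Fin m → ℝ, (∀ i, 0 ≤ x i) → (∑ i, x i = 1) →
      (∀ z : Fin m → ℝ, (∀ i, 0 ≤ z i) → (∑ i, z i = 1) →
        (1 / 2) * ∑ i, (x i - y i) ^ 2 ≤ (1 / 2) * ∑ i, (z i - y i) ^ 2) →
      x = xstar) :=
  simplex_projection_algorithm_correct_general m y σ hsorted ρ hρmem hρmax l hl xstar hx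
end
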